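/- Let μ = 1 if rank(G₀) = m = n, μ = √2 if rank(G₀) = min(m, n) and m ≠ n, and μ = (1 + √5)/2 if rank(G₀) < min(m, n). Define g(s) = σ − (L_f + L_G)s, α(s) = σ − L_G·s, β(s) = μ·σ⁻¹·L_G·s. Let G₀ = UΣVᵀ be a singular value decomposition with U ∈ ℝ^{n×n} orthogonal with columns η₁, …, ηₙ, let r = rank(G₀), and let Λ(s) ∈ ℝ^{n×n} be the diagonal matrix with entries λᵢ(s) = max{ g(s)/(α(s)‖G₀†ηᵢ‖ + β(s)), g(s), 0 } for i = 1, …, r and λᵢ(s) = 0 for i > r. Suppose x ∈ ℝⁿ satisfies (L_f + L_G)·‖x‖ ≤ σ. Then for every q ∈ ℝⁿ with ‖q‖₁ ≤ 1 and every consistent pair (f̂, Ĝ), there exists u ∈ ℝᵐ with ‖u‖ ≤ 1 such that f₀ + U·Λ(‖x‖)·q = f̂(x) + Ĝ(x)·u; that is, f₀ + U·Λ(‖x‖)·q belongs to the guaranteed velocity set V^G_x. -/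

import Mathlib

open Matrix Set

noncomputable def matOpNorm {n m : ℕ} (M : Matrix (Fin n) (Fin m) ℝ) : ℝ :=
  ‖LinearMap.toContinuousLinearMap (Matrix.toEuclideanLin M)‖

noncomputable def appMat {n m : ℕ} (M : Matrix (Fin n) (Fin m) ℝ)
    (v : EuclideanSpace ℝ (Fin m)) : EuclideanSpace ℝ (Fin n) :=
  Matrix.toEuclideanLin M v

noncomputable def colSpace {n m : ℕ} (M : Matrix (Fin n) (Fin m) ℝ) :
    Submodule ℝ (EuclideanSpace ℝ (Fin n)) :=
  LinearMap.range (Matrix.toEuclideanLin M)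

noncomputable def minSV {n m : ℕ} (M : Matrix (Fin n) (Fin m) ℝ) : ℝ :=
  Real.sqrt (sInf {μ : ℝ | μ ≠ 0 ∧
    ∃ i, (show (Mᵀ * M).IsHermitian by
      simpa using Matrix.isHermitian_conjTranspose_mul_self M).eigenvalues i = μ})

/-- A pair `(fh, Gh)` consistent with the prior knowledge of the dynamics. -/
structure Consistent {n m : ℕ} (R : Matrix (Fin n) (Fin m) ℝ) (Lf LG : ℝ)
    (f₀ : EuclideanSpace ℝ (Fin n)) (G₀ : Matrix (Fin n) (Fin m) ℝ)
    (fh : EuclideanSpace ℝ (Fin n) → EuclideanSpace ℝ (Fin n))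
    (Gh : EuclideanSpace ℝ (Fin n) → Matrix (Fin n) (Fin m) ℝ) : Prop where
  lipf : ∀ y z, ‖fh y - fh z‖ ≤ Lf * ‖y - z‖
  lipG : ∀ y z, matOpNorm (Gh y - Gh z) ≤ LG * ‖y - z‖
  f_zero : fh 0 = f₀
  G_zero : Gh 0 = G₀
  f_im : ∀ y, fh y ∈ colSpace R
  factor : ∃ Hh : EuclideanSpace ℝ (Fin n) → Matrix (Fin m) (Fin m) ℝ,
    IsUnit (Hh 0) ∧ ∀ y, Gh y = R * Hh y

/-- The guaranteed velocity set at `x`. -/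
noncomputable def GVS {n m : ℕ} (R : Matrix (Fin n) (Fin m) ℝ) (Lf LG : ℝ)
    (f₀ : EuclideanSpace ℝ (Fin n)) (G₀ : Matrix (Fin n) (Fin m) ℝ)
    (x : EuclideanSpace ℝ (Fin n)) : Set (EuclideanSpace ℝ (Fin n)) :=
  ⋂ (fh : EuclideanSpace ℝ (Fin n) → EuclideanSpace ℝ (Fin n))
    (Gh : EuclideanSpace ℝ (Fin n) → Matrix (Fin n) (Fin m) ℝ)
    (_ : Consistent R Lf LG f₀ G₀ fh Gh),
      {w | ∃ u : EuclideanSpace ℝ (Fin m), ‖u‖ ≤ 1 ∧ w = fh x + appMat (Gh x) u}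

open scoped RealInnerProductSpace
open Module

/-!
Write `s = ‖x‖`, `σ = minSV G₀` and `M = Ĝ(x)`. Expanding in an eigenbasis of `G₀ᵀ G₀` shows
`σ ‖v‖ ≤ ‖G₀ v‖` on `Im G₀ᵀ`: eigenvectors with eigenvalue `0` are orthogonal to `Im G₀ᵀ`, and
every other eigenvalue is at least `σ²`. Consistency makes `M - G₀ = R (Ĥ(x) - Ĥ(0))` map into
`Im R = Im G₀` with norm at most `L_G s < σ`, so `M` is injective on `Im G₀ᵀ` and, the two spaces
having the same dimension, maps it onto `Im G₀` with lower bound `σ - L_G s`.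

Put `W = ∑ λᵢ qᵢ G₀†ηᵢ`, so that `G₀ W = U Λ q`. Since `σ ‖G₀†ηᵢ‖ ≤ ‖ηᵢ‖ = 1` and, as `μ ≥ 1`,
`σ ‖G₀†ηᵢ‖ ≤ α(s) ‖G₀†ηᵢ‖ + β(s)`, each `λᵢ σ ‖G₀†ηᵢ‖ ≤ g(s)`, whence `σ ‖W‖ ≤ g(s)`.
Solving `M u' = f₀ - f̂(x) - (M - G₀) W` in `Im G₀ᵀ` and taking `u = W + u'` gives
`M u = f₀ - f̂(x) + U Λ q` and `(σ - L_G s) ‖u‖ ≤ L_f s + σ ‖W‖ ≤ σ - L_G s`.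
-/

section AppMat

variable {n m : ℕ}

theorem appMat_mul {k : ℕ} (A : Matrix (Fin n) (Fin m) ℝ) (B : Matrix (Fin m) (Fin k) ℝ)
    (v : EuclideanSpace ℝ (Fin k)) : appMat (A * B) v = appMat A (appMat B v) := by
  simp [appMat]

theorem appMat_sub (A B : Matrix (Fin n) (Fin m) ℝ) (v : EuclideanSpace ℝ (Fin m)) :
    appMat (A - B) v = appMat A v - appMat B v := by
  simp [appMat]

theorem inner_appMat_transpose (u : EuclideanSpace ℝ (Fin n)) (v : EuclideanSpace ℝ (Fin m)) :
    ⟪appMat Gᵀ u, v⟫ = ⟪u, appMat G v⟫ := by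
  rw [appMat, appMat, ← conjTranspose_eq_transpose_of_trivial,
    Matrix.toEuclideanLin_conjTranspose_eq_adjoint, LinearMap.adjoint_inner_left]

theorem finrank_colSpace_transpose (G : Matrix (Fin n) (Fin m) ℝ) :
    finrank ℝ (colSpace Gᵀ) = finrank ℝ (colSpace G) := by
  have h {k l : ℕ} (A : Matrix (Fin k) (Fin l) ℝ) : A.rank = finrank ℝ (colSpace A) :=
    A.rank_eq_finrank_range_toLin (EuclideanSpace.basisFun (Fin k) ℝ).toBasis
      (EuclideanSpace.basisFun (Fin l) ℝ).toBasis
  rw [← h, ← h, rank_transpose]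

theorem colSpace_mul_of_isUnit (R : Matrix (Fin n) (Fin m) ℝ) {H : Matrix (Fin m) (Fin m) ℝ}
    (hH : IsUnit H) : colSpace (R * H) = colSpace R := by
  refine le_antisymm ?_ ?_
  · rintro _ ⟨v, rfl⟩
    exact ⟨appMat H v, (appMat_mul R H v).symm⟩
  · rintro _ ⟨v, rfl⟩
    refine ⟨appMat H⁻¹ v, ?_⟩
    change appMat (R * H) (appMat H⁻¹ v) = appMat R v
    rw [← appMat_mul, mul_nonsing_inv_cancel_right _ _ ((isUnit_iff_isUnit_det H).mp hH)]

theorem norm_eq_one_of_transpose_mul_self_eq_one {U : Matrix (Fin n) (Fin n) ℝ}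
    (hU : Uᵀ * U = 1) {η : Fin n → EuclideanSpace ℝ (Fin n)} (hη : ∀ i j, η i j = U j i)
    (i : Fin n) : ‖η i‖ = 1 := by
  refine (pow_eq_one_iff_of_nonneg (norm_nonneg _) two_ne_zero).mp ?_
  rw [EuclideanSpace.real_norm_sq_eq, ← one_apply_eq i, ← hU]
  simp [mul_apply, hη, sq]

theorem appMat_appMat_diagonal_eq_sum {U : Matrix (Fin n) (Fin n) ℝ}
    {η : Fin n → EuclideanSpace ℝ (Fin n)} (hη : ∀ i j, η i j = U j i) (d : Fin n → ℝ)
    (q : EuclideanSpace ℝ (Fin n)) :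
    appMat U (appMat (diagonal d) q) = ∑ i, (d i * q i) • η i := by
  ext j
  simp [appMat, mulVec, dotProduct, diagonal_apply, hη]
  exact Finset.sum_congr rfl fun i _ => by ring

theorem appMat_sum_smul_eq_appMat_diagonal {G : Matrix (Fin n) (Fin m) ℝ}
    {U : Matrix (Fin n) (Fin n) ℝ} {η : Fin n → EuclideanSpace ℝ (Fin n)}
    (hη : ∀ i j, η i j = U j i) {d : Fin n → ℝ} {w : Fin n → EuclideanSpace ℝ (Fin m)}
    (hw : ∀ i, d i • appMat G (w i) = d i • η i) (q : EuclideanSpace ℝ (Fin n)) :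
    appMat G (∑ i, (d i * q i) • w i) = appMat U (appMat (diagonal d) q) := by
  rw [appMat_appMat_diagonal_eq_sum hη]
  refine (map_sum (toEuclideanLin G) _ _).trans (Finset.sum_congr rfl fun i _ => ?_)
  rw [map_smul, mul_comm, mul_smul, mul_smul]
  exact congrArg _ (hw i)

end AppMat

section Spectral

variable {n m : ℕ} (G : Matrix (Fin n) (Fin m) ℝ)

theorem isHermitian_transpose_mul_self : (Gᵀ * G).IsHermitian := by
  simpa using isHermitian_conjTranspose_mul_self G

noncomputable def gramEigenvalues : Fin m → ℝ := (isHermitian_transpose_mul_self G).eigenvalues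

noncomputable def gramEigenbasis : OrthonormalBasis (Fin m) ℝ (EuclideanSpace ℝ (Fin m)) :=
  (isHermitian_transpose_mul_self G).eigenvectorBasis

theorem appMat_transpose_mul_self_gramEigenbasis (i : Fin m) :
    appMat (Gᵀ * G) (gramEigenbasis G i) = gramEigenvalues G i • gramEigenbasis G i := by
  ext j
  exact congrFun ((isHermitian_transpose_mul_self G).mulVec_eigenvectorBasis i) j

theorem norm_appMat_sq_eq_sum (v : EuclideanSpace ℝ (Fin m)) :
    ‖appMat G v‖ ^ 2 = ∑ i, gramEigenvalues G i * ⟪gramEigenbasis G i, v⟫ ^ 2 := by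
  rw [← real_inner_self_eq_norm_sq, ← inner_appMat_transpose, ← appMat_mul,
    ← (gramEigenbasis G).sum_inner_mul_inner]
  refine Finset.sum_congr rfl fun i _ => ?_
  rw [appMat_mul, inner_appMat_transpose, real_inner_comm, ← inner_appMat_transpose, ← appMat_mul,
    appMat_transpose_mul_self_gramEigenbasis, real_inner_smul_left]
  ring

theorem gramEigenvalues_eq_norm_sq (i : Fin m) :
    gramEigenvalues G i = ‖appMat G (gramEigenbasis G i)‖ ^ 2 := by
  rw [norm_appMat_sq_eq_sum, Finset.sum_eq_single i]
  · simp [(gramEigenbasis G).orthonormal.1 i]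
  · intro j _ hji
    simp [(gramEigenbasis G).orthonormal.2 hji]
  · simp

theorem inner_gramEigenbasis_eq_zero {i : Fin m} (hi : gramEigenvalues G i = 0)
    {v : EuclideanSpace ℝ (Fin m)} (hv : v ∈ colSpace Gᵀ) : ⟪gramEigenbasis G i, v⟫ = 0 := by
  obtain ⟨u, rfl⟩ := hv
  have hGe : appMat G (gramEigenbasis G i) = 0 := by
    rw [gramEigenvalues_eq_norm_sq] at hi
    exact norm_eq_zero.mp (pow_eq_zero_iff two_ne_zero |>.mp hi)
  rw [real_inner_comm]
  change ⟪appMat Gᵀ u, _⟫ = 0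
  rw [inner_appMat_transpose, hGe, inner_zero_right]

theorem gramEigenvalues_nonneg (i : Fin m) : 0 ≤ gramEigenvalues G i := by
  rw [gramEigenvalues_eq_norm_sq]
  positivity

theorem minSV_eq_sqrt_sInf :
    minSV G = √(sInf {μ : ℝ | μ ≠ 0 ∧ ∃ i, gramEigenvalues G i = μ}) := rfl

theorem minSV_sq_le_gramEigenvalues {i : Fin m} (hi : gramEigenvalues G i ≠ 0) :
    minSV G ^ 2 ≤ gramEigenvalues G i := by
  have hfin : {μ : ℝ | μ ≠ 0 ∧ ∃ j, gramEigenvalues G j = μ}.Finite :=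
    (Set.finite_range _).subset fun μ ⟨_, j, hj⟩ => ⟨j, hj⟩
  rw [minSV_eq_sqrt_sInf, Real.sq_sqrt]
  · exact csInf_le hfin.bddBelow ⟨hi, i, rfl⟩
  · exact Real.sInf_nonneg fun μ ⟨_, j, hj⟩ => hj ▸ gramEigenvalues_nonneg G j

theorem minSV_pos (hG : G ≠ 0) : 0 < minSV G := by
  set T := {μ : ℝ | μ ≠ 0 ∧ ∃ i, gramEigenvalues G i = μ}
  have hT : T.Nonempty := by
    by_contra hT
    refine hG (Matrix.toEuclideanLin.map_eq_zero_iff.mp (LinearMap.ext fun v => ?_))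
    have h0 : ∀ i, gramEigenvalues G i = 0 := fun i => by
      by_contra hi
      exact hT ⟨_, hi, i, rfl⟩
    simpa [h0, appMat] using norm_appMat_sq_eq_sum G v
  obtain ⟨hne, i, hi⟩ : sInf T ∈ T :=
    hT.csInf_mem ((Set.finite_range _).subset fun μ ⟨_, j, hj⟩ => ⟨j, hj⟩)
  rw [minSV_eq_sqrt_sInf, Real.sqrt_pos]
  exact (hi ▸ gramEigenvalues_nonneg G i).lt_of_ne' hne

theorem minSV_mul_norm_le {v : EuclideanSpace ℝ (Fin m)} (hv : v ∈ colSpace Gᵀ) :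
    minSV G * ‖v‖ ≤ ‖appMat G v‖ := by
  refine le_of_sq_le_sq ?_ (norm_nonneg _)
  rw [mul_pow, ← (gramEigenbasis G).sum_sq_inner_right, Finset.mul_sum, norm_appMat_sq_eq_sum]
  refine Finset.sum_le_sum fun i _ => ?_
  by_cases hi : gramEigenvalues G i = 0
  · simp [inner_gramEigenbasis_eq_zero G hi hv]
  · exact mul_le_mul_of_nonneg_right (minSV_sq_le_gramEigenvalues G hi) (sq_nonneg _)

end Spectral

section Perturbation

variable {E F : Type*} [NormedAddCommGroup E] [Module ℝ E] [FiniteDimensional ℝ E]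
  [NormedAddCommGroup F] [Module ℝ F]
  {G M : E →ₗ[ℝ] F} {K : Submodule ℝ E} {σ δ : ℝ}

theorem exists_mem_apply_eq_of_perturbation (hK : finrank ℝ K = finrank ℝ (LinearMap.range G))
    (hG : ∀ v ∈ K, σ * ‖v‖ ≤ ‖G v‖) (hδ : δ < σ) (hMG : ∀ v, ‖M v - G v‖ ≤ δ * ‖v‖)
    (hrange : ∀ v, M v - G v ∈ LinearMap.range G) {c : F} (hc : c ∈ LinearMap.range G) :
    ∃ v ∈ K, M v = c ∧ (σ - δ) * ‖v‖ ≤ ‖c‖ := by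
  have hlow : ∀ v ∈ K, (σ - δ) * ‖v‖ ≤ ‖M v‖ := fun v hv => by
    have := norm_le_norm_add_norm_sub' (G v) (M v)
    rw [norm_sub_rev] at this
    linarith [hG v hv, hMG v]
  have hMK : ∀ v : K, M v ∈ LinearMap.range G := fun v => by
    simpa using add_mem (hrange v) (LinearMap.mem_range_self G v)
  let L : K →ₗ[ℝ] LinearMap.range G := (M.comp K.subtype).codRestrict _ hMK
  have hL : Function.Injective L := by
    refine (injective_iff_map_eq_zero L).mpr fun v hv => ?_
    have hMv : M v = 0 := congrArg Subtype.val hv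
    have := hlow v v.2
    rw [hMv, norm_zero] at this
    have hv0 : ‖(v : E)‖ = 0 :=
      le_antisymm (nonpos_of_mul_nonpos_right this (sub_pos.mpr hδ)) (norm_nonneg _)
    exact Subtype.ext (norm_eq_zero.mp hv0)
  obtain ⟨v, hv⟩ := (LinearMap.injective_iff_surjective_of_finrank_eq_finrank hK).mp hL ⟨c, hc⟩
  have hMv : M v = c := congrArg Subtype.val hv
  exact ⟨v, v.2, hMv, hMv ▸ hlow v v.2⟩

theorem exists_apply_eq_add_of_perturbation (hK : finrank ℝ K = finrank ℝ (LinearMap.range G))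
    (hG : ∀ v ∈ K, σ * ‖v‖ ≤ ‖G v‖) (hδ : δ < σ) (hMG : ∀ v, ‖M v - G v‖ ≤ δ * ‖v‖)
    (hrange : ∀ v, M v - G v ∈ LinearMap.range G) {c : F} (hc : c ∈ LinearMap.range G) (W : E) :
    ∃ u, M u = c + G W ∧ (σ - δ) * ‖u‖ ≤ ‖c‖ + σ * ‖W‖ := by
  obtain ⟨v, -, hMv, hv⟩ := exists_mem_apply_eq_of_perturbation hK hG hδ hMG hrange
    (sub_mem hc (hrange W))
  refine ⟨W + v, by rw [map_add, hMv]; abel, ?_⟩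
  calc (σ - δ) * ‖W + v‖ ≤ (σ - δ) * ‖W‖ + (σ - δ) * ‖v‖ := by
        rw [← mul_add]; exact mul_le_mul_of_nonneg_left (norm_add_le W v) (sub_pos.mpr hδ).le
    _ ≤ (σ - δ) * ‖W‖ + (‖c‖ + δ * ‖W‖) := by
        gcongr
        exact hv.trans ((norm_sub_le _ _).trans (by linarith [hMG W]))
    _ = ‖c‖ + σ * ‖W‖ := by ring

end Perturbation

namespace Consistent

variable {n m : ℕ} {R : Matrix (Fin n) (Fin m) ℝ} {Lf LG : ℝ} {f₀ : EuclideanSpace ℝ (Fin n)}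
  {G₀ : Matrix (Fin n) (Fin m) ℝ} {fh : EuclideanSpace ℝ (Fin n) → EuclideanSpace ℝ (Fin n)}
  {Gh : EuclideanSpace ℝ (Fin n) → Matrix (Fin n) (Fin m) ℝ}

theorem colSpace_eq (h : Consistent R Lf LG f₀ G₀ fh Gh) : colSpace G₀ = colSpace R := by
  obtain ⟨Hh, hunit, hfac⟩ := h.factor
  rw [← h.G_zero, hfac, colSpace_mul_of_isUnit R hunit]

theorem sub_mem_colSpace (h : Consistent R Lf LG f₀ G₀ fh Gh) (y : EuclideanSpace ℝ (Fin n)) :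
    f₀ - fh y ∈ colSpace G₀ := by
  rw [h.colSpace_eq, ← h.f_zero]
  exact sub_mem (h.f_im 0) (h.f_im y)

theorem norm_sub_le (h : Consistent R Lf LG f₀ G₀ fh Gh) (y : EuclideanSpace ℝ (Fin n)) :
    ‖f₀ - fh y‖ ≤ Lf * ‖y‖ := by
  simpa [h.f_zero] using h.lipf 0 y

theorem appMat_sub_mem_colSpace (h : Consistent R Lf LG f₀ G₀ fh Gh)
    (y : EuclideanSpace ℝ (Fin n)) (v : EuclideanSpace ℝ (Fin m)) :
    appMat (Gh y) v - appMat G₀ v ∈ colSpace G₀ := by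
  obtain ⟨Hh, -, hfac⟩ := h.factor
  rw [h.colSpace_eq, ← h.G_zero, hfac, hfac, appMat_mul, appMat_mul]
  exact ⟨_, map_sub _ _ _⟩

theorem norm_appMat_sub_le (h : Consistent R Lf LG f₀ G₀ fh Gh)
    (y : EuclideanSpace ℝ (Fin n)) (v : EuclideanSpace ℝ (Fin m)) :
    ‖appMat (Gh y) v - appMat G₀ v‖ ≤ LG * ‖y‖ * ‖v‖ := by
  have hop := h.lipG y 0
  rw [h.G_zero, sub_zero] at hop
  calc ‖appMat (Gh y) v - appMat G₀ v‖ = ‖appMat (Gh y - G₀) v‖ := by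
        rw [appMat_sub]
    _ ≤ matOpNorm (Gh y - G₀) * ‖v‖ :=
        (LinearMap.toContinuousLinearMap (toEuclideanLin (Gh y - G₀))).le_opNorm v
    _ ≤ LG * ‖y‖ * ‖v‖ := by gcongr

theorem exists_appMat_eq (h : Consistent R Lf LG f₀ G₀ fh Gh) {y : EuclideanSpace ℝ (Fin n)}
    (hy : LG * ‖y‖ < minSV G₀) {c : EuclideanSpace ℝ (Fin n)} (hc : c ∈ colSpace G₀)
    (W : EuclideanSpace ℝ (Fin m)) :
    ∃ u, appMat (Gh y) u = c + appMat G₀ W ∧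
      (minSV G₀ - LG * ‖y‖) * ‖u‖ ≤ ‖c‖ + minSV G₀ * ‖W‖ :=
  exists_apply_eq_add_of_perturbation (G := toEuclideanLin G₀) (M := toEuclideanLin (Gh y))
    (finrank_colSpace_transpose G₀) (fun _ hv => minSV_mul_norm_le G₀ hv) hy
    (h.norm_appMat_sub_le y) (h.appMat_sub_mem_colSpace y) hc W

end Consistent

theorem max_max_div_mul_le {σ δ μ g t : ℝ} (hσ : 0 < σ) (hδ : 0 ≤ δ) (hμ : 1 ≤ μ) (hg : 0 ≤ g)
    (ht : 0 ≤ t) (hσt : σ * t ≤ 1) :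
    max (max (g / ((σ - δ) * t + μ * σ⁻¹ * δ)) g) 0 * (σ * t) ≤ g := by
  have hK : 0 ≤ σ * t := mul_nonneg hσ.le ht
  have htσ : t ≤ σ⁻¹ := by
    rw [← one_div, le_div_iff₀' hσ]
    exact hσt
  have hKD : σ * t ≤ (σ - δ) * t + μ * σ⁻¹ * δ := by
    nlinarith [mul_le_mul_of_nonneg_left htσ hδ,
      mul_nonneg (sub_nonneg.mpr hμ) (mul_nonneg (inv_nonneg.mpr hσ.le) hδ)]
  rw [max_mul_of_nonneg _ _ hK, max_mul_of_nonneg _ _ hK, zero_mul]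
  refine max_le (max_le ?_ (mul_le_of_le_one_right hg hσt)) hg
  rcases (hK.trans hKD).eq_or_lt with hD | hD
  · rw [← hD, div_zero, zero_mul]
    exact hg
  · calc _ ≤ g / ((σ - δ) * t + μ * σ⁻¹ * δ) * ((σ - δ) * t + μ * σ⁻¹ * δ) :=
          mul_le_mul_of_nonneg_left hKD (div_nonneg hg hD.le)
      _ = g := div_mul_cancel₀ _ hD.ne'

theorem mul_norm_sum_smul_le {ι E : Type*} [Fintype ι] [SeminormedAddCommGroup E]
    [NormedSpace ℝ E] {σ g : ℝ} {a q : ι → ℝ} {w : ι → E} (hσ : 0 ≤ σ) (hg : 0 ≤ g)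
    (ha : ∀ i, 0 ≤ a i) (haw : ∀ i, a i * (σ * ‖w i‖) ≤ g) (hq : ∑ i, |q i| ≤ 1) :
    σ * ‖∑ i, (a i * q i) • w i‖ ≤ g :=
  calc σ * ‖∑ i, (a i * q i) • w i‖ ≤ σ * ∑ i, ‖(a i * q i) • w i‖ := by
        gcongr; exact norm_sum_le _ _
    _ = ∑ i, |q i| * (a i * (σ * ‖w i‖)) := by
        rw [Finset.mul_sum]
        refine Finset.sum_congr rfl fun i _ => ?_
        rw [norm_smul, Real.norm_eq_abs, abs_mul, abs_of_nonneg (ha i)]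
        ring
    _ ≤ ∑ i, |q i| * g := by gcongr with i; exact haw i
    _ = (∑ i, |q i|) * g := by rw [Finset.sum_mul]
    _ ≤ g := mul_le_of_le_one_left hg hq

theorem theorem4_polytope_velocities_general {n m : ℕ} (R : Matrix (Fin n) (Fin m) ℝ)
    (Lf LG : ℝ) (hLf : 0 < Lf) (hLG : 0 < LG)
    (f₀ : EuclideanSpace ℝ (Fin n))
    (G₀ : Matrix (Fin n) (Fin m) ℝ) (hG₀ : G₀ ≠ 0)
    (μ : ℝ)
    (hμ : μ = if G₀.rank = m ∧ m = n then 1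
      else if G₀.rank = min m n then Real.sqrt 2
      else (1 + Real.sqrt 5) / 2)
    (g α β : ℝ → ℝ)
    (hg : ∀ s, g s = minSV G₀ - (Lf + LG) * s)
    (hα : ∀ s, α s = minSV G₀ - LG * s)
    (hβ : ∀ s, β s = μ * (minSV G₀)⁻¹ * (LG * s))
    -- a singular value decomposition `G₀ = U * S * Vᵀ`
    (U : Matrix (Fin n) (Fin n) ℝ) (hU : Uᵀ * U = 1)
    -- the columns `ηᵢ` of `U` and the minimal-norm solutions `w i` of `G₀ w = ηᵢ`
    (η : Fin n → EuclideanSpace ℝ (Fin n)) (hη : ∀ i j, η i j = U j i)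
    (w : Fin n → EuclideanSpace ℝ (Fin m))
    (hw : ∀ i : Fin n, (i : ℕ) < G₀.rank →
      w i ∈ colSpace G₀ᵀ ∧ appMat G₀ (w i) = η i)
    (lam : Fin n → ℝ → ℝ)
    (hlam : ∀ (i : Fin n) (s : ℝ), lam i s =
      if (i : ℕ) < G₀.rank then
        max (max (g s / (α s * ‖w i‖ + β s)) (g s)) 0
      else 0)
    (x : EuclideanSpace ℝ (Fin n)) (hx : (Lf + LG) * ‖x‖ ≤ minSV G₀) :
    ∀ q : EuclideanSpace ℝ (Fin n), (∑ i, |q i|) ≤ 1 →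
      ∀ fh Gh, Consistent R Lf LG f₀ G₀ fh Gh →
        ∃ u : EuclideanSpace ℝ (Fin m), ‖u‖ ≤ 1 ∧
          f₀ + appMat U (appMat (Matrix.diagonal fun i => lam i ‖x‖) q)
            = fh x + appMat (Gh x) u := by
  intro q hq fh Gh hcons
  set s := ‖x‖
  set σ := minSV G₀
  have hσ : 0 < σ := minSV_pos G₀ hG₀
  have hδ : 0 ≤ LG * s := mul_nonneg hLG.le (norm_nonneg x)
  have hδσ : LG * s < σ := by
    rcases hδ.eq_or_lt with h | h
    · rwa [← h]
    · nlinarith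
  have hgs : 0 ≤ g s := by rw [hg]; linarith
  have hμ1 : 1 ≤ μ := by
    rw [hμ]
    split_ifs
    exacts [le_rfl, Real.one_lt_sqrt_two.le, Real.one_lt_goldenRatio.le]
  have hcoef : ∀ i, 0 ≤ lam i s ∧ lam i s * (σ * ‖w i‖) ≤ g s ∧
      lam i s • appMat G₀ (w i) = lam i s • η i := by
    intro i
    by_cases hi : (i : ℕ) < G₀.rank
    · have hσw : σ * ‖w i‖ ≤ 1 := by
        simpa [(hw i hi).2, norm_eq_one_of_transpose_mul_self_eq_one hU hη] using
          minSV_mul_norm_le G₀ (hw i hi).1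
      rw [hlam, if_pos hi, hα, hβ]
      exact ⟨le_max_right _ _, max_max_div_mul_le hσ hδ hμ1 hgs (norm_nonneg _) hσw,
        by rw [(hw i hi).2]⟩
    · simp [hlam, hi, hgs]
  set W := ∑ i, (lam i s * q i) • w i
  have hGW : appMat G₀ W = appMat U (appMat (diagonal fun i => lam i s) q) :=
    appMat_sum_smul_eq_appMat_diagonal hη (fun i => (hcoef i).2.2) q
  have hW : σ * ‖W‖ ≤ g s :=
    mul_norm_sum_smul_le hσ.le hgs (fun i => (hcoef i).1) (fun i => (hcoef i).2.1) hq
  obtain ⟨u, hu, hun⟩ := hcons.exists_appMat_eq hδσ (hcons.sub_mem_colSpace x) W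
  refine ⟨u, le_of_mul_le_mul_left ?_ (sub_pos.mpr hδσ), by rw [hu, hGW]; abel⟩
  linarith [hcons.norm_sub_le x, hg s]

/-- **Theorem 4, velocity part.** With `G₀ = U S Vᵀ` a singular value
decomposition (`U`, `V` orthogonal, `S` rectangular-diagonal with nonnegative,
nonincreasing diagonal entries), `r = rank G₀`, and `Λ(s)` the diagonal matrix of the
`λᵢ(s)`, for `(L_f + L_G)‖x‖ ≤ σ` and every `q` with `‖q‖₁ ≤ 1`, the point
`f₀ + U Λ(‖x‖) q` is achieved by every consistent pair with an admissible control,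
i.e. it belongs to the GVS at `x`.  Here `G₀† ηᵢ` is formalized as the unique
`w i ∈ Im G₀ᵀ` with `G₀ (w i) = ηᵢ`, `ηᵢ` being the `i`-th column of `U`. -/
theorem theorem4_polytope_velocities {n m : ℕ} (R : Matrix (Fin n) (Fin m) ℝ)
    (Lf LG : ℝ) (hLf : 0 < Lf) (hLG : 0 < LG)
    (f₀ : EuclideanSpace ℝ (Fin n)) (hf₀ : f₀ ∈ colSpace R)
    (H₀ : Matrix (Fin m) (Fin m) ℝ) (hH₀ : IsUnit H₀)
    (G₀ : Matrix (Fin n) (Fin m) ℝ) (hG₀fac : G₀ = R * H₀) (hG₀ : G₀ ≠ 0)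
    (μ : ℝ)
    (hμ : μ = if G₀.rank = m ∧ m = n then 1
      else if G₀.rank = min m n then Real.sqrt 2
      else (1 + Real.sqrt 5) / 2)
    (g α β : ℝ → ℝ)
    (hg : ∀ s, g s = minSV G₀ - (Lf + LG) * s)
    (hα : ∀ s, α s = minSV G₀ - LG * s)
    (hβ : ∀ s, β s = μ * (minSV G₀)⁻¹ * (LG * s))
    -- a singular value decomposition `G₀ = U * S * Vᵀ`
    (U : Matrix (Fin n) (Fin n) ℝ) (hU : Uᵀ * U = 1)
    (V : Matrix (Fin m) (Fin m) ℝ) (hV : Vᵀ * V = 1)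
    (S : Matrix (Fin n) (Fin m) ℝ) (hSVD : G₀ = U * S * Vᵀ)
    (hSdiag : ∀ (i : Fin n) (j : Fin m), (i : ℕ) ≠ (j : ℕ) → S i j = 0)
    (hSnonneg : ∀ (i : Fin n) (j : Fin m), 0 ≤ S i j)
    (hSmono : ∀ (i i' : Fin n) (j j' : Fin m), (i : ℕ) = (j : ℕ) →
      (i' : ℕ) = (j' : ℕ) → (i : ℕ) ≤ (i' : ℕ) → S i' j' ≤ S i j)
    -- the columns `ηᵢ` of `U` and the minimal-norm solutions `w i` of `G₀ w = ηᵢ`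
    (η : Fin n → EuclideanSpace ℝ (Fin n)) (hη : ∀ i j, η i j = U j i)
    (w : Fin n → EuclideanSpace ℝ (Fin m))
    (hw : ∀ i : Fin n, (i : ℕ) < G₀.rank →
      w i ∈ colSpace G₀ᵀ ∧ appMat G₀ (w i) = η i)
    (lam : Fin n → ℝ → ℝ)
    (hlam : ∀ (i : Fin n) (s : ℝ), lam i s =
      if (i : ℕ) < G₀.rank then
        max (max (g s / (α s * ‖w i‖ + β s)) (g s)) 0
      else 0)
    (x : EuclideanSpace ℝ (Fin n)) (hx : (Lf + LG) * ‖x‖ ≤ minSV G₀) :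
    ∀ q : EuclideanSpace ℝ (Fin n), (∑ i, |q i|) ≤ 1 →
      ∀ fh Gh, Consistent R Lf LG f₀ G₀ fh Gh →
        ∃ u : EuclideanSpace ℝ (Fin m), ‖u‖ ≤ 1 ∧
          f₀ + appMat U (appMat (Matrix.diagonal fun i => lam i ‖x‖) q)
            = fh x + appMat (Gh x) u :=
  theorem4_polytope_velocities_general R Lf LG hLf hLG f₀ G₀ hG₀ μ hμ g α β hg hα hβ U hU η hη w hw
    lam hlam x hx
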